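/- arXiv:2011.07452 — 4 statements merged into one kernel-verified Lean document; each statement's English description precedes it below -/
import Mathlib

section
/- Let k be a field, let A be a commutative Artinian local k-algebra with maximal ideal m, let R be a commutative k-algebra, and set B = R ⊗_k A. If s ∈ B is such that its image under the canonical surjection B → B/mB is a nonzerodivisor in B/mB, then s is a nonzerodivisor in B (i.e., multiplication by s on B is injective). -/
/-!
Fix an `A`-basis of `B = R ⊗[k] A`. Membership in `J • B` is then read off coordinatewise, so
`t • c ∈ J • B` with `t ∉ J` forces `c ∈ m • B`, every coordinate of `c` being a non-unit.
We show `z * s ∈ J • B → z ∈ J • B` for all ideals `J` by descending induction (`A` is Noetherian),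
the case `J = m` being the hypothesis. For `J ≠ A`, nilpotency of `m` gives `t ∉ J` with
`t • m ≤ J`; the claim for `J + (t)` writes `z = j + t • c`, then `t • (c * s) ∈ J • B`, so
`c * s ∈ m • B`, hence `c ∈ m • B` and `t • c ∈ J • B`. The case `J = 0` is the theorem.
-/

open TensorProduct IsLocalRing Pointwise

theorem Module.Basis.mem_ideal_smul_top_iff {ι A M : Type*} [CommRing A] [AddCommGroup M]
    [Module A M] (b : Module.Basis ι A M) (I : Ideal A) (x : M) :
    x ∈ I • (⊤ : Submodule A M) ↔ ∀ i, b.repr x i ∈ I := by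
  have h : (I • ⊤ : Submodule A M).map b.repr.toLinearMap = Finsupp.submodule fun _ ↦ I := by
    have hI := Finsupp.submodule_smul A (M := A) ι (fun _ ↦ ⊤) I
    simp only [smul_eq_mul, Ideal.mul_top] at hI
    rw [Submodule.map_smul'', Submodule.map_top, LinearEquiv.range, hI, Finsupp.submodule_top]
  rw [← Finsupp.mem_submodule_iff, ← h, Submodule.mem_map_equiv]
  simp

theorem Ideal.exists_notMem_forall_mul_mem_of_isNilpotent {A : Type*} [CommRing A]
    {I J : Ideal A} (hI : IsNilpotent I) (hJ : J ≠ ⊤) : ∃ t ∉ J, ∀ a ∈ I, t * a ∈ J := by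
  classical
  obtain ⟨N, hN⟩ := hI
  have hex : ∃ n, I ^ n ≤ J := ⟨N, by simp [hN]⟩
  obtain ⟨n, hn⟩ : ∃ n, Nat.find hex = n + 1 := Nat.exists_eq_succ_of_ne_zero fun h0 ↦ hJ <| by
    simpa [h0] using Nat.find_spec hex
  obtain ⟨t, ht, htJ⟩ := Set.not_subset.mp (Nat.find_min hex (m := n) (by omega))
  refine ⟨t, htJ, fun a ha ↦ ?_⟩
  exact (hn ▸ Nat.find_spec hex) (pow_succ I n ▸ Ideal.mul_mem_mul ht ha)

section
variable {A M : Type*} [CommRing A] [IsLocalRing A] [AddCommGroup M] [Module A M] [Module.Free A M]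

theorem mem_maximalIdeal_smul_top_of_smul_mem_ideal_smul_top {J : Ideal A} {t : A} (ht : t ∉ J)
    {c : M} (h : t • c ∈ J • (⊤ : Submodule A M)) : c ∈ maximalIdeal A • (⊤ : Submodule A M) := by
  let b := Module.Free.chooseBasis A M
  rw [b.mem_ideal_smul_top_iff] at h ⊢
  intro i
  by_contra hc
  specialize h i
  rw [map_smul, Finsupp.smul_apply, smul_eq_mul,
    J.mul_unit_mem_iff_mem (notMem_maximalIdeal.mp hc)] at h
  exact ht h

theorem LinearMap.mem_ideal_smul_top_of_apply_mem [IsNoetherianRing A]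
    (hm : IsNilpotent (maximalIdeal A)) (f : M →ₗ[A] M)
    (hf : ∀ z, f z ∈ maximalIdeal A • (⊤ : Submodule A M) →
      z ∈ maximalIdeal A • (⊤ : Submodule A M))
    (J : Ideal A) {z : M} (hz : f z ∈ J • (⊤ : Submodule A M)) : z ∈ J • (⊤ : Submodule A M) := by
  induction J using WellFoundedGT.induction generalizing z with | _ J ih
  rcases eq_or_ne J ⊤ with rfl | hJ
  · simp
  obtain ⟨t, htJ, htm⟩ := Ideal.exists_notMem_forall_mul_mem_of_isNilpotent hm hJ
  have hlt : J < J ⊔ Ideal.span {t} :=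
    left_lt_sup.mpr (by rwa [Ideal.span_singleton_le_iff_mem])
  have hz' := ih _ hlt (Submodule.smul_mono_left le_sup_left hz)
  rw [Submodule.sup_smul, Submodule.ideal_span_singleton_smul, Submodule.mem_sup] at hz'
  obtain ⟨y, hy, _, hc, rfl⟩ := hz'
  obtain ⟨c, -, rfl⟩ := (Submodule.mem_smul_pointwise_iff_exists _ _ _).mp hc
  have hfc : t • f c ∈ J • (⊤ : Submodule A M) := by
    simpa using Submodule.sub_mem _ hz (Submodule.smul_top_le_comap_smul_top J f hy)
  have hcm := hf c (mem_maximalIdeal_smul_top_of_smul_mem_ideal_smul_top htJ hfc)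
  refine add_mem hy (Submodule.smul_mono_left (Ideal.span_singleton_mul_le_iff.mpr htm) ?_)
  rw [Submodule.mul_smul]
  exact Submodule.smul_mem_smul (Ideal.mem_span_singleton_self t) hcm

end

theorem mem_nonZeroDivisors_of_mk_mem_nonZeroDivisors {A B : Type*} [CommRing A]
    [IsArtinianRing A] [IsLocalRing A] [CommRing B] [Algebra A B] [Module.Free A B] {s : B}
    (hs : Ideal.Quotient.mk ((maximalIdeal A).map (algebraMap A B)) s ∈
      nonZeroDivisors (B ⧸ (maximalIdeal A).map (algebraMap A B))) :
    s ∈ nonZeroDivisors B := by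
  have hmem (z : B) : z ∈ (maximalIdeal A).map (algebraMap A B) ↔
      z ∈ maximalIdeal A • (⊤ : Submodule A B) := by
    rw [Ideal.smul_top_eq_map]; rfl
  have hf (z : B) (hz : z * s ∈ maximalIdeal A • (⊤ : Submodule A B)) :
      z ∈ maximalIdeal A • (⊤ : Submodule A B) := by
    rw [← hmem, ← Ideal.Quotient.eq_zero_iff_mem] at hz ⊢
    exact mem_nonZeroDivisors_iff_right.mp hs _ (by rwa [← map_mul])
  rw [mem_nonZeroDivisors_iff_right]
  intro z hz
  simpa using LinearMap.mem_ideal_smul_top_of_apply_mem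
    ((isArtinianRing_iff_isNilpotent_maximalIdeal A).mp ‹_›) (LinearMap.mulRight A s) hf ⊥
    (z := z) (by simp [hz])

/-- Let `k` be a field, `A` a commutative Artinian local `k`-algebra with
maximal ideal `m`, `R` a commutative `k`-algebra, and `B = R ⊗[k] A`. If `s ∈ B` has
image under the canonical surjection `B → B/mB` which is a nonzerodivisor in `B/mB`,
then `s` is a nonzerodivisor in `B`. -/
theorem section_nonZeroDivisor_of_nonZeroDivisor_mod_maximalIdeal
    (k : Type*) [Field k]
    (A : Type*) [CommRing A] [IsArtinianRing A] [IsLocalRing A] [Algebra k A]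
    (R : Type*) [CommRing R] [Algebra k R]
    (mB : Ideal (R ⊗[k] A))
    (hmB : mB = Ideal.map
      (Algebra.TensorProduct.includeRight : A →ₐ[k] R ⊗[k] A).toRingHom
      (IsLocalRing.maximalIdeal A))
    (s : R ⊗[k] A)
    (hs : Ideal.Quotient.mk mB s ∈ nonZeroDivisors ((R ⊗[k] A) ⧸ mB)) :
    s ∈ nonZeroDivisors (R ⊗[k] A) := by
  let : Algebra A (R ⊗[k] A) := Algebra.TensorProduct.rightAlgebra
  have : Module.Free A (R ⊗[k] A) :=
    .of_equiv (Algebra.TensorProduct.commRight k A R).toLinearEquiv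
  subst hmB
  exact mem_nonZeroDivisors_of_mk_mem_nonZeroDivisors hs
end

section
/- Let k be a field, let A be a commutative Artinian local k-algebra with maximal ideal m and residue field A/m ≅ k, let R be a commutative k-algebra which is an integral domain, and set B = R ⊗_k A. If s ∈ B has nonzero image under the canonical surjection B → B/mB ≅ R, then s is a nonzerodivisor in B (i.e., multiplication by s on B is injective). -/
/-!
The residue map `A → k` induces an `R`-algebra map `π : R ⊗[k] A → R ⊗[k] k ≃ R` whose kernel
is `mB`; this kernel is nil because `m` is the nilradical of the Artinian local ring `A`. So
`s = π s + t` with `t` nilpotent, say `t ^ n = 0`, and then `s` divides `(π s) ^ n`. Finally `π s`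
is a nonzerodivisor of `R ⊗[k] A`, since it is nonzero in the domain `R` and `R ⊗[k] A` is flat
over `R`.
-/

open TensorProduct

open scoped nonZeroDivisors

theorem add_mem_nonZeroDivisors_of_isNilpotent {B : Type*} [CommRing B] {u t : B}
    (hu : u ∈ B⁰) (ht : IsNilpotent t) : u + t ∈ B⁰ := by
  obtain ⟨n, hn⟩ := ht
  have hdvd : u + t ∣ u ^ n := by
    have := sub_dvd_pow_sub_pow u (-t) n
    rwa [sub_neg_eq_add, neg_pow, hn, mul_zero, sub_zero] at this
  obtain ⟨q, hq⟩ := hdvd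
  exact (mul_mem_nonZeroDivisors.mp (hq ▸ pow_mem hu n)).1

theorem algebraMap_mem_nonZeroDivisors_of_flat {R S : Type*} [CommRing R] [CommRing S]
    [Algebra R S] [Module.Flat R S] {r : R} (hr : r ∈ R⁰) : algebraMap R S r ∈ S⁰ := by
  have hreg := IsSMulRegular.of_flat (S := S) (isRegular_iff_mem_nonZeroDivisors.mpr hr).left
  rw [mem_nonZeroDivisors_iff_right]
  intro x hx
  exact hreg (by simpa [mul_comm] using hx)

theorem mem_nonZeroDivisors_of_ker_le_nilradical {R B : Type*} [CommRing R] [CommRing B]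
    [Algebra R B] [Module.Flat R B] (π : B →ₐ[R] R) (hπ : RingHom.ker π ≤ nilradical B)
    {s : B} (hs : π s ∈ R⁰) : s ∈ B⁰ := by
  have hnil : IsNilpotent (s - algebraMap R B (π s)) := mem_nilradical.mp (hπ (by simp))
  simpa using
    add_mem_nonZeroDivisors_of_isNilpotent (algebraMap_mem_nonZeroDivisors_of_flat hs) hnil

theorem Ideal.map_nilradical_le {A B F : Type*} [CommRing A] [CommRing B] [FunLike F A B]
    [RingHomClass F A B] (f : F) : (nilradical A).map f ≤ nilradical B :=
  Ideal.map_le_iff_le_comap.mpr fun _ hx => (mem_nilradical.mp hx).map f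

theorem Algebra.TensorProduct.ker_rid_comp_map_id {k R A : Type*} [CommRing k] [CommRing R]
    [Algebra k R] [Ring A] [Algebra k A] {g : A →ₐ[k] k} (hg : Function.Surjective g) :
    RingHom.ker ((Algebra.TensorProduct.rid k R R).toAlgHom.comp
        (Algebra.TensorProduct.map (AlgHom.id R R) g)) =
      (RingHom.ker g).map (Algebra.TensorProduct.includeRight : A →ₐ[k] R ⊗[k] A) := by
  rw [← Algebra.TensorProduct.lTensor_ker _ hg]
  ext x
  simp only [RingHom.mem_ker, AlgHom.comp_apply, AlgEquiv.coe_toAlgHom,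
    map_eq_zero_iff _ (AlgEquiv.injective _)]
  -- `lTensor_ker` is about the `k`-linear `map (AlgHom.id k R) g`, the same function
  rfl

section Residue

variable (k A : Type*) [CommRing k] [CommRing A] [IsLocalRing A] [Algebra k A]
  (hres : Function.Bijective (algebraMap k (A ⧸ IsLocalRing.maximalIdeal A)))

noncomputable def residueAlgHom : A →ₐ[k] k :=
  (AlgEquiv.ofBijective (Algebra.ofId k _) hres).symm.toAlgHom.comp (Ideal.Quotient.mkₐ k _)

theorem residueAlgHom_surjective : Function.Surjective (residueAlgHom k A hres) := by
  rw [residueAlgHom, AlgHom.coe_comp]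
  exact (AlgEquiv.surjective _).comp Ideal.Quotient.mk_surjective

theorem ker_residueAlgHom : RingHom.ker (residueAlgHom k A hres) = IsLocalRing.maximalIdeal A := by
  ext a
  simp [residueAlgHom, RingHom.mem_ker, Ideal.Quotient.eq_zero_iff_mem]

end Residue

/-- Let `k` be a field, `A` a commutative Artinian local `k`-algebra with
maximal ideal `m` and residue field `A/m ≅ k`, `R` an integral domain which is a
`k`-algebra, and `B = R ⊗[k] A`. If `s ∈ B` has nonzero image under the canonical
surjection `B → B/mB (≅ R)`, then `s` is a nonzerodivisor in `B`. -/
theorem section_nonZeroDivisor_of_ne_zero_mod_maximalIdeal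
    (k : Type*) [Field k]
    (A : Type*) [CommRing A] [IsArtinianRing A] [IsLocalRing A] [Algebra k A]
    (hres : Function.Bijective (algebraMap k (A ⧸ IsLocalRing.maximalIdeal A)))
    (R : Type*) [CommRing R] [IsDomain R] [Algebra k R]
    (mB : Ideal (R ⊗[k] A))
    (hmB : mB = Ideal.map
      (Algebra.TensorProduct.includeRight : A →ₐ[k] R ⊗[k] A).toRingHom
      (IsLocalRing.maximalIdeal A))
    (s : R ⊗[k] A)
    (hs : Ideal.Quotient.mk mB s ≠ 0) :
    s ∈ nonZeroDivisors (R ⊗[k] A) := by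
  let π := (Algebra.TensorProduct.rid k R R).toAlgHom.comp
    (Algebra.TensorProduct.map (AlgHom.id R R) (residueAlgHom k A hres))
  have hker : RingHom.ker π = mB := by
    rw [Algebra.TensorProduct.ker_rid_comp_map_id (residueAlgHom_surjective k A hres),
      ker_residueAlgHom, hmB]
    rfl
  have hnil : mB ≤ nilradical (R ⊗[k] A) := by
    rw [hmB, ← Ring.KrullDimLE.nilradical_eq_maximalIdeal]
    exact Ideal.map_nilradical_le _
  have hπs : π s ≠ 0 := fun h0 => hs (Ideal.Quotient.eq_zero_iff_mem.mpr (hker ▸ h0))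
  exact mem_nonZeroDivisors_of_ker_le_nilradical π (hker ▸ hnil)
    (mem_nonZeroDivisors_of_ne_zero hπs)
end

section
/- Let R be a commutative ring, let f ∈ R be a nonzerodivisor, and let n ≥ 1 be an integer. Let R_f denote the localization of R away from f (inverting the powers of f), and let W = R_f/R denote the cokernel of the canonical R-module map R → R_f. Then the map α : R/(fⁿ) → W induced by r ↦ (class of r/fⁿ) is well defined and injective, the multiplication-by-fⁿ map β : W → W is surjective, and the image of α equals the kernel of β; that is, 0 → R/(fⁿ) → W → W → 0 is a short exact sequence of R-modules. -/
/-- Let `R` be a commutative ring, `f ∈ R` a nonzerodivisor, `n ≥ 1`.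
Let `R_f` be the localization of `R` away from `f` and `W = R_f/R` the cokernel of the
canonical map `R → R_f`. Then the map `α : R/(fⁿ) → W`, `r ↦ [r/fⁿ]`, is well defined
and injective, multiplication by `fⁿ` on `W` is surjective, and `im α = ker β`; i.e.
`0 → R/(fⁿ) → W → W → 0` is a short exact sequence of `R`-modules. -/
theorem quotient_pow_localizationCokernel_sequence_exact
    (R : Type*) [CommRing R] (f : R) (hf : f ∈ nonZeroDivisors R)
    (n : ℕ) (hn : 1 ≤ n)
    (W : Type*) [AddCommGroup W] [Module R W]
    (q : Localization.Away f →ₗ[R] W)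
    (hq : Function.Surjective q)
    (hker : LinearMap.ker q = LinearMap.range (Algebra.linearMap R (Localization.Away f)))
    (β : W →ₗ[R] W) (hβ : β = LinearMap.lsmul R W (f ^ n)) :
    ∃ α : (R ⧸ Ideal.span {f ^ n}) →ₗ[R] W,
      (∀ r : R, α (Ideal.Quotient.mk (Ideal.span {f ^ n}) r) =
        q (algebraMap R (Localization.Away f) r * (IsLocalization.Away.invSelf f) ^ n)) ∧
      Function.Injective α ∧
      Function.Surjective β ∧
      LinearMap.range α = LinearMap.ker β := by
  set S := Localization.Away f with hS
  set u : S := IsLocalization.Away.invSelf f with hu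
  have hmul : algebraMap R S f * u = 1 := IsLocalization.Away.mul_invSelf f
  have hmuln : algebraMap R S (f ^ n) * u ^ n = 1 := by
    rw [map_pow, ← mul_pow, hmul, one_pow]
  have hinj : Function.Injective (algebraMap R S) :=
    IsLocalization.injective S (Submonoid.powers_le.mpr hf)
  -- q kills the image of algebraMap
  have hq0 : ∀ r : R, q (algebraMap R S r) = 0 := by
    intro r
    have : algebraMap R S r ∈ LinearMap.ker q := by
      rw [hker]; exact ⟨r, rfl⟩
    exact this
  -- the pre-α map
  let α₀ : R →ₗ[R] W :=
    { toFun := fun r => q (algebraMap R S r * u ^ n)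
      map_add' := by intro a b; rw [map_add, add_mul, map_add]
      map_smul' := by
        intro a b
        simp only [smul_eq_mul, map_mul, RingHom.id_apply, mul_assoc]
        rw [← Algebra.smul_def, map_smul] }
  have hα₀ : ∀ r : R, α₀ r = q (algebraMap R S r * u ^ n) := fun _ => rfl
  -- kernel computation: α₀ r = 0 ↔ r ∈ span {f^n}
  have hker₀ : LinearMap.ker α₀ = Ideal.span {f ^ n} := by
    ext r
    constructor
    · intro hr
      have hr' : q (algebraMap R S r * u ^ n) = 0 := hr
      have : algebraMap R S r * u ^ n ∈ LinearMap.ker q := hr'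
      rw [hker] at this
      obtain ⟨s, hs⟩ := this
      have hs' : algebraMap R S s = algebraMap R S r * u ^ n := hs
      have : algebraMap R S (s * f ^ n) = algebraMap R S r := by
        rw [map_mul, hs', mul_assoc, mul_comm (u ^ n), hmuln, mul_one]
      have hr2 : s * f ^ n = r := hinj this
      rw [Ideal.mem_span_singleton]
      exact ⟨s, by rw [← hr2, mul_comm]⟩
    · intro hr
      rw [Ideal.mem_span_singleton] at hr
      obtain ⟨s, hs⟩ := hr
      have : α₀ r = q (algebraMap R S s) := by
        rw [hα₀, hs, mul_comm (f ^ n) s, map_mul (algebraMap R S), mul_assoc, hmuln, mul_one]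
      rw [LinearMap.mem_ker, this, hq0]
  have hle : Ideal.span {f ^ n} ≤ LinearMap.ker α₀ := le_of_eq hker₀.symm
  refine ⟨Submodule.liftQ (Ideal.span {f ^ n}) α₀ hle, fun r => ?_, ?_, ?_, ?_⟩
  · exact Submodule.liftQ_apply _ α₀ r
  · rw [← LinearMap.ker_eq_bot]
    exact Submodule.ker_liftQ_eq_bot _ _ _ (le_of_eq hker₀)
  · -- surjectivity of β
    intro w
    obtain ⟨x, hx⟩ := hq w
    refine ⟨q (x * u ^ n), ?_⟩
    rw [hβ, LinearMap.lsmul_apply, ← map_smul, Algebra.smul_def, ← mul_assoc,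
      mul_comm (algebraMap R S (f ^ n)) x, mul_assoc, hmuln, mul_one, hx]
  · -- range α = ker β
    ext w
    rw [LinearMap.mem_ker, hβ, LinearMap.lsmul_apply]
    constructor
    · rintro ⟨x, rfl⟩
      obtain ⟨r, rfl⟩ := Submodule.Quotient.mk_surjective _ x
      have h1 : (Submodule.liftQ (Ideal.span {f ^ n}) α₀ hle) (Submodule.Quotient.mk r)
          = q (algebraMap R S r * u ^ n) := rfl
      rw [h1, ← map_smul, Algebra.smul_def, ← mul_assoc,
        mul_comm (algebraMap R S (f ^ n)), mul_assoc, hmuln, mul_one, hq0]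
    · intro hw
      obtain ⟨x, rfl⟩ := hq w
      rw [← map_smul, Algebra.smul_def] at hw
      have : algebraMap R S (f ^ n) * x ∈ LinearMap.ker q := hw
      rw [hker] at this
      obtain ⟨s, hs⟩ := this
      refine ⟨Submodule.Quotient.mk s, ?_⟩
      have h1 : (Submodule.liftQ (Ideal.span {f ^ n}) α₀ hle) (Submodule.Quotient.mk s)
          = q (algebraMap R S s * u ^ n) := rfl
      rw [h1]
      congr 1
      have hs' : algebraMap R S s = algebraMap R S (f ^ n) * x := hs
      rw [hs', mul_comm (algebraMap R S (f ^ n)) x, mul_assoc, hmuln, mul_one]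
end

section
/- Let R be a commutative ring and let M₁, M₂, M₃, N₂, N₃, P₂, P₃, Q₂, Q₃ be R-modules, with R-linear maps φ : M₁ → M₂, ψ : M₂ → M₃, δ₁ : M₂ → N₂ × P₂, δ₂ : N₂ × P₂ → Q₂, ψ_N : N₂ → N₃, ψ_P : P₂ → P₃, ψ_Q : Q₂ → Q₃, ι : M₃ → N₃ × P₃, and ρ : N₃ × P₃ → Q₃, satisfying: (a) ι ∘ ψ = (ψ_N × ψ_P) ∘ δ₁ and ψ_Q ∘ δ₂ = ρ ∘ (ψ_N × ψ_P) (the squares commute); (b) ker ψ = im φ; (c) ker δ₂ ⊆ im δ₁; (d) ι and ψ_Q are injective. Then for every ξ ∈ N₂ one has ψ_N(ξ) = 0 if and only if there exists ξ' ∈ M₁ with δ₁(φ(ξ')) = (ξ, 0). -/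
/-!
Write `F = ψN × ψP`. Injectivity of `ι` turns the first square into `ker ψ = δ₁⁻¹(ker F)`, and
injectivity of `ψQ` turns the second into `ker F ≤ ker δ₂ ≤ range δ₁`. Hence
`ker F = δ₁(δ₁⁻¹(ker F)) = δ₁(ker ψ) = δ₁(range φ)`, and `(ξ, 0) ∈ ker F` exactly when `ψN ξ = 0`.
-/

namespace LinearMap

variable {R M₁ M₂ M₃ N N' Q Q' : Type*} [Semiring R]
  [AddCommMonoid M₁] [AddCommMonoid M₂] [AddCommMonoid M₃] [AddCommMonoid N]
  [AddCommMonoid N'] [AddCommMonoid Q] [AddCommMonoid Q']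
  [Module R M₁] [Module R M₂] [Module R M₃] [Module R N] [Module R N'] [Module R Q]
  [Module R Q']

theorem ker_eq_comap_ker_of_comp_eq {ψ : M₂ →ₗ[R] M₃} {ι : M₃ →ₗ[R] N'} {δ : M₂ →ₗ[R] N}
    {F : N →ₗ[R] N'} (hsq : ι.comp ψ = F.comp δ) (hι : Function.Injective ι) :
    ker ψ = (ker F).comap δ := by
  rw [← ker_comp_of_ker_eq_bot ψ (ker_eq_bot_of_injective hι), hsq, ker_comp]

theorem ker_le_ker_of_comp_eq {F : N →ₗ[R] N'} {δ : N →ₗ[R] Q} {ψQ : Q →ₗ[R] Q'}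
    {ρ : N' →ₗ[R] Q'} (hsq : ψQ.comp δ = ρ.comp F) (hψQ : Function.Injective ψQ) :
    ker F ≤ ker δ := by
  rw [← ker_comp_of_ker_eq_bot δ (ker_eq_bot_of_injective hψQ), hsq]
  exact ker_le_ker_comp F ρ

theorem ker_eq_range_comp_of_comap_ker_eq {φ : M₁ →ₗ[R] M₂} {δ : M₂ →ₗ[R] N}
    {F : N →ₗ[R] N'} (hcomap : (ker F).comap δ = range φ) (hle : ker F ≤ range δ) :
    ker F = range (δ.comp φ) := by
  rw [range_comp, ← hcomap, Submodule.map_comap_eq_self hle]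

end LinearMap

/-- The abstract diagram chase underlying Theorems 4.2 and 4.4(2):
given a commutative ladder of `R`-module maps with the stated exactness and
injectivity properties, an element `ξ ∈ N₂` satisfies `ψ_N ξ = 0` if and only if
`(ξ, 0)` comes from `M₁` via `δ₁ ∘ φ`. -/
theorem diagram_chase_kernel_description
    {R : Type*} [CommRing R]
    {M₁ M₂ M₃ N₂ N₃ P₂ P₃ Q₂ Q₃ : Type*}
    [AddCommGroup M₁] [AddCommGroup M₂] [AddCommGroup M₃]
    [AddCommGroup N₂] [AddCommGroup N₃] [AddCommGroup P₂] [AddCommGroup P₃]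
    [AddCommGroup Q₂] [AddCommGroup Q₃]
    [Module R M₁] [Module R M₂] [Module R M₃]
    [Module R N₂] [Module R N₃] [Module R P₂] [Module R P₃]
    [Module R Q₂] [Module R Q₃]
    (φ : M₁ →ₗ[R] M₂) (ψ : M₂ →ₗ[R] M₃)
    (δ₁ : M₂ →ₗ[R] N₂ × P₂) (δ₂ : N₂ × P₂ →ₗ[R] Q₂)
    (ψN : N₂ →ₗ[R] N₃) (ψP : P₂ →ₗ[R] P₃) (ψQ : Q₂ →ₗ[R] Q₃)
    (ι : M₃ →ₗ[R] N₃ × P₃) (ρ : N₃ × P₃ →ₗ[R] Q₃)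
    (hsq₁ : ι.comp ψ = (ψN.prodMap ψP).comp δ₁)
    (hsq₂ : ψQ.comp δ₂ = ρ.comp (ψN.prodMap ψP))
    (hexact : LinearMap.ker ψ = LinearMap.range φ)
    (hMV : LinearMap.ker δ₂ ≤ LinearMap.range δ₁)
    (hι : Function.Injective ι) (hψQ : Function.Injective ψQ) :
    ∀ ξ : N₂, ψN ξ = 0 ↔ ∃ ξ' : M₁, δ₁ (φ ξ') = (ξ, 0) := by
  have hker : LinearMap.ker (ψN.prodMap ψP) = LinearMap.range (δ₁.comp φ) :=
    LinearMap.ker_eq_range_comp_of_comap_ker_eq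
      (by rw [← LinearMap.ker_eq_comap_ker_of_comp_eq hsq₁ hι, hexact])
      ((LinearMap.ker_le_ker_of_comp_eq hsq₂ hψQ).trans hMV)
  intro ξ
  simpa using SetLike.ext_iff.mp hker (ξ, 0)
end
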